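/- If κ is an inaccessible cardinal, then for every family X of fewer than κ stationary subsets of κ there exists a single stationary set y ⊆ κ that stationarily splits every member of X; consequently the stationary reaping number r^cl_κ is at least κ. -/

import Mathlib

/-!
Every stationary subset `S` of a regular uncountable `κ` splits into two disjoint stationary
sets. At stationarily many `δ ∈ S` the set `S` does not reflect, witnessed by a ladder `E δ`
accumulating at `δ` but at no point of `S` below `δ`. A diagonal-intersection argument yields
a `ξ` such that `δ ↦ (some point of E δ above ξ)` is a regressive function which is unbounded
on a stationary set; Fodor's lemma then gives a stationary fibre and a disjoint stationary set
of larger values.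

Given fewer than `κ` stationary sets `X`, the atoms of the Boolean algebra they generate (the
fibres of `δ ↦ {x ∈ X | δ ∈ x}`) number at most `2 ^ #X < κ`, as `κ` is a strong limit. By
`κ`-completeness of the non-stationary ideal each `x ∈ X` contains a stationary atom, so the
union of one half of every stationary atom splits every member of `X`. Hence no family of
fewer than `κ` stationary sets is reaping.
-/

open Set Cardinal

/-- `c` is a club in the well-ordered type `α` (thought of as the cardinal `κ = #α`):
it is closed (contains the supremum of each of its nonempty bounded subsets) and unbounded. -/
def IsClubIn {α : Type*} [LinearOrder α] (c : Set α) : Prop :=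
  (∀ s ⊆ c, s.Nonempty → ∀ a : α, IsLUB s a → a ∈ c) ∧ ∀ a : α, ∃ b ∈ c, a < b

/-- `x` is stationary: it meets every club. -/
def IsStatIn {α : Type*} [LinearOrder α] (x : Set α) : Prop :=
  ∀ c : Set α, IsClubIn c → (x ∩ c).Nonempty

/-- `y` stationarily splits `x`: both `x ∩ y` and `x \ y` are stationary. -/
def StatSplits {α : Type*} [LinearOrder α] (y x : Set α) : Prop :=
  IsStatIn (x ∩ y) ∧ IsStatIn (x \ y)

/-- The stationary reaping number `r^cl_κ`: the least cardinality of a family `R` of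
stationary sets such that every stationary `x` fails to stationarily split some member
of `R`. -/
noncomputable def statReapingNumber (α : Type*) [LinearOrder α] : Cardinal :=
  sInf { c : Cardinal | ∃ R : Set (Set α), (∀ y ∈ R, IsStatIn y) ∧
    (∀ x : Set α, IsStatIn x → ∃ y ∈ R, ¬ StatSplits x y) ∧ c = #R }

open Order Ordinal

universe u v

theorem isClubIn_iff_isClub {α : Type u} [LinearOrder α] [NoMaxOrder α] {c : Set α} :
    IsClubIn c ↔ IsClub c := by
  refine ⟨fun ⟨hclosed, hunbdd⟩ => ⟨fun d hd hne _ a ha => hclosed d hd hne a ha,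
    fun a => (hunbdd a).imp fun _ => And.imp_right le_of_lt⟩, fun hc => ⟨?_, fun a => ?_⟩⟩
  · exact fun s hs hne a ha => hc.isLUB_mem hs hne ha
  · obtain ⟨b, hab⟩ := exists_gt a
    obtain ⟨c', hc', hbc⟩ := hc.isCofinal b
    exact ⟨c', hc', hab.trans_le hbc⟩

theorem isStatIn_iff_isStationary {α : Type u} [LinearOrder α] [NoMaxOrder α] {x : Set α} :
    IsStatIn x ↔ IsStationary x :=
  forall_congr' fun _ => by rw [isClubIn_iff_isClub]

section LinearOrder

variable {α : Type u} [LinearOrder α]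

def IsLimitPoint (E : Set α) (δ : α) : Prop :=
  ¬ IsMin δ ∧ ∀ ξ < δ, ∃ e ∈ E, ξ < e ∧ e < δ

/-- For `δ ∈ S` a limit of uncountable cofinality, `δ ∈ nonReflectingPoints S` iff `S ∩ δ` is
non-stationary in `δ`; at limits of countable cofinality it always holds (take for `E` a cofinal
`ω`-sequence). -/
def nonReflectingPoints (S : Set α) : Set α :=
  {δ ∈ S | ∃ E : Set α, IsLimitPoint E δ ∧ ∀ γ ∈ S, γ < δ → ¬ IsLimitPoint E γ}

theorem IsClub.mem_of_isLimitPoint {C : Set α} {δ : α} (hC : IsClub C)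
    (h : IsLimitPoint C δ) : δ ∈ C := by
  obtain ⟨ξ, hξ⟩ := not_isMin_iff.1 h.1
  obtain ⟨e, he, -, heδ⟩ := h.2 ξ hξ
  refine hC.isLUB_mem inter_subset_left ⟨e, he, heδ⟩ ⟨fun c hc => le_of_lt hc.2, fun b hb => ?_⟩
  by_contra! hbδ
  obtain ⟨c, hc, hbc, hcδ⟩ := h.2 b hbδ
  exact (hb ⟨hc, hcδ⟩).not_gt hbc

theorem IsClub.exists_gt [NoMaxOrder α] {C : Set α} (hC : IsClub C) (a : α) :
    ∃ δ ∈ C, a < δ := by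
  obtain ⟨b, hab⟩ := NoMaxOrder.exists_gt a
  obtain ⟨δ, hδ, hbδ⟩ := hC.isCofinal b
  exact ⟨δ, hδ, hab.trans_le hbδ⟩

theorem isClub_Ioi [NoMaxOrder α] (a : α) : IsClub (Ioi a) := by
  refine ⟨fun d hd ⟨x, hx⟩ _ b hb => (hd hx).trans_le (hb.1 hx), fun x => ?_⟩
  obtain ⟨y, hy⟩ := exists_gt (max a x)
  exact ⟨y, (le_max_left a x).trans_lt hy, (le_max_right a x).trans hy.le⟩

theorem exists_isLUB_of_bddAbove [WellFoundedLT α] {s : Set α} (hs : BddAbove s) :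
    ∃ a, IsLUB s a :=
  let ⟨a, ha, hmin⟩ := wellFounded_lt.has_min _ hs
  ⟨a, ha, fun b hb => not_lt.1 (hmin b hb)⟩

end LinearOrder

namespace IsRegularCardinalOrder

variable {α : Type u} [LinearOrder α] [WellFoundedLT α]

theorem of_isRegular (hreg : (#α).IsRegular) (hinit : ∀ a : α, #(Iio a) < #α) :
    IsRegularCardinalOrder α := by
  have hord : (#α).ord = typeLT α := by
    refine (ord_le_type _).antisymm (le_of_forall_lt fun o ho => ?_)
    obtain ⟨a, rfl⟩ := typein_surj _ ho
    exact lt_ord.2 (hinit a)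
  exact ⟨by rw [← cof_type, ← hord, hreg.cof_ord]⟩

variable [IsRegularCardinalOrder α]

theorem noMaxOrder [Uncountable α] : NoMaxOrder α := by
  rw [← noTopOrder_iff_noMaxOrder, ← Order.one_lt_cof_iff, cof_eq_cardinalMk]
  exact one_lt_aleph0.trans (aleph0_lt_mk_iff.2 ‹_›)

theorem cof_ne_aleph0 [Uncountable α] : cof α ≠ ℵ₀ := by
  rw [cof_eq_cardinalMk]
  exact (aleph0_lt_mk_iff.2 ‹_›).ne'

theorem bddAbove_of_mk_lt {s : Set α} (hs : #s < #α) : BddAbove s :=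
  .of_not_isCofinal fun h => (cof_le h).not_gt (by rwa [cof_eq_cardinalMk])

end IsRegularCardinalOrder

section RegularCardinalOrder

open IsRegularCardinalOrder

variable {α : Type u} [LinearOrder α] [WellFoundedLT α] [IsRegularCardinalOrder α]
  [Uncountable α] {S : Set α}

attribute [local instance] IsRegularCardinalOrder.noMaxOrder

theorem isClub_setOf_forall_lt_apply_lt (f : α → α) : IsClub {δ | ∀ ξ < δ, f ξ < δ} := by
  refine ⟨fun d hd _ _ a ha ξ hξ => ?_, fun a => ?_⟩
  · obtain ⟨x, hxd, hξx⟩ := (lt_isLUB_iff ha).1 hξ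
    exact (hd hxd ξ hξx).trans_le (ha.1 hxd)
  have hstep (x : α) : ∃ y, x < y ∧ ∀ ξ ≤ x, f ξ < y := by
    obtain ⟨b, hb⟩ := bddAbove_of_mk_lt <| mk_image_le.trans_lt <|
      mk_Iic_lt x ord_cardinalMk (aleph0_lt_mk_iff.2 ‹_›).le
    obtain ⟨y, hy⟩ := exists_gt (max x b)
    exact ⟨y, (le_max_left x b).trans_lt hy,
      fun ξ hξ => (hb (mem_image_of_mem f hξ)).trans_lt ((le_max_right x b).trans_lt hy)⟩
  choose step hstep using hstep
  set g : ℕ → α := fun n => step^[n] a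
  have hg : BddAbove (range g) := bddAbove_of_mk_lt <|
    (le_aleph0_iff_set_countable.2 (countable_range g)).trans_lt (aleph0_lt_mk_iff.2 ‹_›)
  obtain ⟨δ, hδ⟩ := exists_isLUB_of_bddAbove hg
  refine ⟨δ, fun ξ hξ => ?_, hδ.1 ⟨0, rfl⟩⟩
  obtain ⟨_, ⟨n, rfl⟩, hξn⟩ := (lt_isLUB_iff hδ).1 hξ
  refine ((hstep (g n)).2 ξ hξn.le).trans_le (hδ.1 ⟨n + 1, ?_⟩)
  simp only [g, Function.iterate_succ_apply']

theorem isClub_setOf_isLimitPoint {C : Set α} (hC : IsCofinal C) :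
    IsClub {δ | IsLimitPoint C δ} := by
  refine ⟨fun d hd ⟨x, hx⟩ _ a ha =>
    ⟨fun hmin => (hd hx).1 (hmin.mono (ha.1 hx)), fun ξ hξ => ?_⟩, fun a => ?_⟩
  · obtain ⟨y, hyd, hξy⟩ := (lt_isLUB_iff ha).1 hξ
    obtain ⟨e, he, hξe, hey⟩ := (hd hyd).2 ξ hξy
    exact ⟨e, he, hξe, hey.trans_le (ha.1 hyd)⟩
  have hnext (x : α) : ∃ y ∈ C, x < y := by
    obtain ⟨b, hb⟩ := exists_gt x
    obtain ⟨y, hy, hby⟩ := hC b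
    exact ⟨y, hy, hb.trans_le hby⟩
  choose next hnextC hnext using hnext
  obtain ⟨δ, hδ, haδ⟩ := (isClub_setOf_forall_lt_apply_lt next).exists_gt a
  exact ⟨δ, ⟨not_isMin_of_lt haδ, fun ξ hξ => ⟨next ξ, hnextC ξ, hnext ξ, hδ ξ hξ⟩⟩, haδ.le⟩

theorem isClub_diagInter {C : α → Set α} (hC : ∀ ξ, IsClub (C ξ)) :
    IsClub {δ | ∀ ξ < δ, δ ∈ C ξ} := by
  refine ⟨fun d hd _ _ a ha ξ hξ => ?_, fun a => ?_⟩
  · obtain ⟨x, hxd, hξx⟩ := (lt_isLUB_iff ha).1 hξ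
    exact (hC ξ).isLUB_mem (t := d ∩ Ici x) (fun y hy => hd hy.1 ξ (hξx.trans_le hy.2))
      ⟨x, hxd, le_rfl⟩ (ha.inter_Ici_of_mem hxd)
  have hnext (β : α) : ∃ y, (∀ ξ ≤ β, y ∈ C ξ) ∧ β < y := by
    have hsmall : #(Iic β) < cof α := by
      rw [cof_eq_cardinalMk]
      exact mk_Iic_lt β ord_cardinalMk (aleph0_lt_mk_iff.2 ‹_›).le
    have hclub : IsClub (⋂ ξ : Iic β, C ξ) :=
      IsClub.iInter cof_ne_aleph0 (by simpa using hsmall) fun ξ => hC ξ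
    obtain ⟨y, hy, hβy⟩ := hclub.exists_gt β
    exact ⟨y, fun ξ hξ => mem_iInter.1 hy ⟨ξ, hξ⟩, hβy⟩
  choose next hnextC hnext using hnext
  obtain ⟨δ, hδ, haδ⟩ := (isClub_setOf_forall_lt_apply_lt next).exists_gt a
  refine ⟨δ, fun ξ hξ => (hC ξ).mem_of_isLimitPoint ⟨not_isMin_of_lt hξ, fun ζ hζ => ?_⟩, haδ.le⟩
  exact ⟨next (max ξ ζ), hnextC _ ξ (le_max_left ξ ζ),
    (le_max_right ξ ζ).trans_lt (hnext _), hδ _ (max_lt hξ hζ)⟩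

theorem IsStationary.exists_isStationary_setOf_eq (hS : IsStationary S) {f : α → α}
    (hf : ∀ δ ∈ S, f δ < δ) : ∃ a, IsStationary {δ ∈ S | f δ = a} := by
  by_contra! h
  simp_rw [not_isStationary_iff] at h
  choose C hC hdisj using h
  obtain ⟨δ, hδS, hδ⟩ := hS (isClub_diagInter hC)
  exact disjoint_left.1 (hdisj (f δ)) ⟨hδS, rfl⟩ (hδ _ (hf δ hδS))

theorem IsStationary.isStationary_nonReflectingPoints (hS : IsStationary S) :
    IsStationary (nonReflectingPoints S) := by
  intro C hC
  obtain ⟨δ, ⟨hδS, hδC⟩, hmin⟩ := wellFounded_lt.has_min (S ∩ {δ | IsLimitPoint C δ})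
    (hS (isClub_setOf_isLimitPoint hC.isCofinal))
  exact ⟨δ, ⟨hδS, C, hδC, fun γ hγS hγδ hγC => hmin γ ⟨hγS, hγC⟩ hγδ⟩,
    hC.mem_of_isLimitPoint hδC⟩

theorem IsStationary.exists_regressive_forall_isStationary_lt (hS : IsStationary S) :
    ∃ T ⊆ S, ∃ f : α → α, IsStationary T ∧ (∀ δ ∈ T, f δ < δ) ∧
      ∀ η, IsStationary {δ ∈ T | η < f δ} := by
  set N := nonReflectingPoints S
  choose! E hElim hEthin using fun δ (hδ : δ ∈ N) => hδ.2
  choose! step hstepE hstep_gt hstep_lt using fun δ (hδ : δ ∈ N) => (hElim δ hδ).2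
  obtain ⟨ξ₀, hξ₀⟩ : ∃ ξ₀, ∀ η, IsStationary {δ ∈ N | ξ₀ < δ ∧ η < step δ ξ₀} := by
    by_contra! hne
    choose η hη using hne
    simp_rw [not_isStationary_iff] at hη
    choose C hC hdisj using hη
    obtain ⟨δ, hδN, hδη, hδpos⟩ := hS.isStationary_nonReflectingPoints
      ((isClub_setOf_forall_lt_apply_lt η).inter cof_ne_aleph0
        (isClub_Ioi (Classical.arbitrary α)))
    obtain ⟨δ', hδ'N, hδ'C, hδδ'⟩ := hS.isStationary_nonReflectingPoints
      ((isClub_diagInter hC).inter cof_ne_aleph0 (isClub_Ioi δ))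
    -- `step δ' ξ ≤ η ξ < δ` for all `ξ < δ`, so `E δ'` accumulates at `δ ∈ S`
    refine hEthin δ' hδ'N δ hδN.1 hδδ' ⟨not_isMin_of_lt hδpos, fun ξ hξ => ?_⟩
    have hξδ' := hξ.trans hδδ'
    refine ⟨step δ' ξ, hstepE δ' hδ'N ξ hξδ', hstep_gt δ' hδ'N ξ hξδ', ?_⟩
    refine (not_lt.1 fun hlt => ?_).trans_lt (hδη ξ hξ)
    exact disjoint_left.1 (hdisj ξ) ⟨hδ'N, hξδ', hlt⟩ (hδ'C ξ hξδ')
  refine ⟨{δ ∈ N | ξ₀ < δ ∧ ξ₀ < step δ ξ₀}, fun δ hδ => hδ.1.1, (step · ξ₀), hξ₀ ξ₀,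
    fun δ hδ => hstep_lt δ hδ.1 ξ₀ hδ.2.1, fun η => (hξ₀ (max η ξ₀)).mono ?_⟩
  rintro δ ⟨hδN, hξδ, hlt⟩
  exact ⟨⟨hδN, hξδ, (le_max_right _ _).trans_lt hlt⟩, (le_max_left _ _).trans_lt hlt⟩

theorem IsStationary.exists_disjoint_subsets (hS : IsStationary S) :
    ∃ P ⊆ S, ∃ Q ⊆ S, Disjoint P Q ∧ IsStationary P ∧ IsStationary Q := by
  obtain ⟨T, hTS, f, hT, hfT, hunbdd⟩ := hS.exists_regressive_forall_isStationary_lt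
  obtain ⟨a, ha⟩ := hT.exists_isStationary_setOf_eq hfT
  refine ⟨_, fun δ hδ => hTS hδ.1, _, fun δ hδ => hTS hδ.1, ?_, ha, hunbdd a⟩
  exact disjoint_left.2 fun δ hδa haδ => haδ.2.ne' hδa.2

theorem exists_splits_of_isStationary_preimage {β : Type v} (π : α → β)
    (hβ : lift.{u} #β < lift.{v} #α) :
    ∃ y : Set α, ∀ t : Set β, IsStationary (π ⁻¹' t) →
      IsStationary (π ⁻¹' t ∩ y) ∧ IsStationary (π ⁻¹' t \ y) := by
  choose! P hP Q hQ hPQ hPstat hQstat using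
    fun b (hb : IsStationary (π ⁻¹' {b})) => hb.exists_disjoint_subsets
  refine ⟨{δ | δ ∈ P (π δ)}, fun t ht => ?_⟩
  have ht_fibers : π ⁻¹' t = ⋃ b : t, π ⁻¹' {b.1} := by ext; simp
  have hsmall : lift.{u} #t < lift.{v} (cof α) := by
    rw [cof_eq_cardinalMk]
    exact (lift_le.2 (mk_set_le t)).trans_lt hβ
  obtain ⟨⟨b, hbt⟩, hb⟩ := (isStationary_iUnion_iff cof_ne_aleph0 hsmall).1 (ht_fibers ▸ ht)
  refine ⟨(hPstat b hb).mono fun δ hδ => ?_, (hQstat b hb).mono fun δ hδ => ?_⟩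
  · have hπδ : π δ = b := hP b hb hδ
    exact ⟨show π δ ∈ t from hπδ ▸ hbt, show δ ∈ P (π δ) from hπδ ▸ hδ⟩
  · have hπδ : π δ = b := hQ b hb hδ
    exact ⟨show π δ ∈ t from hπδ ▸ hbt,
      fun hδP => disjoint_left.1 (hPQ b hb) (show δ ∈ P b from hπδ ▸ hδP) hδ⟩

theorem exists_isStationary_splits {X : Set (Set α)} (hX : 2 ^ #X < #α)
    (hXstat : ∀ x ∈ X, IsStationary x) :
    ∃ y, IsStationary y ∧ ∀ x ∈ X, IsStationary (x ∩ y) ∧ IsStationary (x \ y) := by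
  obtain ⟨y, hy⟩ := exists_splits_of_isStationary_preimage (fun δ => {x : X | δ ∈ x.1})
    (by simpa [mk_set] using hX)
  refine ⟨y, by simpa using (hy univ (by simp)).1, fun x hx => ?_⟩
  have hx_preimage : (fun δ => {x : X | δ ∈ x.1}) ⁻¹' {s | ⟨x, hx⟩ ∈ s} = x := by ext; simp
  have hxstat := hXstat x hx
  rw [← hx_preimage] at hxstat ⊢
  exact hy _ hxstat

end RegularCardinalOrder

theorem le_statReapingNumber {α : Type u} [LinearOrder α] [NoMaxOrder α] {c : Cardinal}
    (h : ∀ R : Set (Set α), #R < c → (∀ y ∈ R, IsStatIn y) →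
      ∃ y, IsStatIn y ∧ ∀ x ∈ R, StatSplits y x) :
    c ≤ statReapingNumber α := by
  refine le_csInf ⟨_, {y | IsStatIn y}, fun y hy => hy,
    fun x hx => ⟨x, hx, fun hsplit => ?_⟩, rfl⟩ ?_
  · simpa [isStatIn_iff_isStationary] using hsplit.2
  rintro _ ⟨R, hRstat, hreap, rfl⟩
  by_contra! hR
  obtain ⟨y, hy, hsplit⟩ := h R hR hRstat
  obtain ⟨x, hxR, hx⟩ := hreap y hy
  exact hx (hsplit x hxR)

/-- If `κ` is inaccessible, then for every family `X` of fewer than `κ` stationary sets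
there is a single stationary set `y` stationarily splitting every member of `X`;
consequently `r^cl_κ ≥ κ`. Here `κ` is represented as a well-ordered type `α` of
inaccessible cardinality all of whose proper initial segments are of size `< #α`. -/
theorem statReapingNumber_ge {α : Type*} [LinearOrder α] [WellFoundedLT α]
    (hinacc : (#α).IsInaccessible)
    (hinit : ∀ a : α, #(Set.Iio a) < #α) :
    (∀ X : Set (Set α), #X < #α → (∀ x ∈ X, IsStatIn x) →
      ∃ y : Set α, IsStatIn y ∧ ∀ x ∈ X, StatSplits y x) ∧
    #α ≤ statReapingNumber α := by
  have : IsRegularCardinalOrder α := .of_isRegular hinacc.isRegular hinit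
  have : Uncountable α := aleph0_lt_mk_iff.1 hinacc.aleph0_lt
  have : NoMaxOrder α := IsRegularCardinalOrder.noMaxOrder
  have hsplit (X : Set (Set α)) (hX : #X < #α) (hXstat : ∀ x ∈ X, IsStatIn x) :
      ∃ y : Set α, IsStatIn y ∧ ∀ x ∈ X, StatSplits y x := by
    simp only [StatSplits, isStatIn_iff_isStationary] at hXstat ⊢
    exact exists_isStationary_splits (hinacc.isStrongPrelimit hX) hXstat
  exact ⟨hsplit, le_statReapingNumber hsplit⟩
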